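/- Let B be a commutative O-algebra with π-derivation δ and associated Frobenius lift φ, and assume φ(π·1_B) = π·1_B. Let n ≥ 1 and let t_0, t_1, …, t_n ∈ B satisfy φ^j(t_0) = Σ_{i=0}^{j} π^i · t_i^{q^{j−i}} for every 0 ≤ j ≤ n. Then π^n · t_n = Σ_{i=0}^{n−1} Σ_{j=1}^{q^{n−1−i}} π^{i+j} · binom(q^{n−1−i}, j) · t_i^{q·(q^{n−1−i}−j)} · δ(t_i)^j, where binom denotes the binomial coefficient. (Equivalently, when π is a non-zero-divisor in B, t_n = δ(t_{n−1}) + Σ_{i=0}^{n−2} Σ_{j=1}^{q^{n−1−i}} π^{i+j−n} binom(q^{n−1−i}, j) t_i^{q(q^{n−1−i}−j)} δ(t_i)^j.) -/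

import Mathlib

open MvPolynomial

/-!
The map `φ x = x ^ q + π δ x` is a ring endomorphism fixing `π`, so applying it to the
relation for `j = m` gives `φ^[m+1] t₀ = ∑_{i ≤ m} π^i (t_i^q + π δ t_i)^(q^(m-i))`.
Expanding each power by the binomial theorem, the leading terms reproduce
`∑_{i ≤ m} π^i t_i^(q^(m+1-i))`, which cancels against the relation for `j = m + 1` and
leaves `π^(m+1) t_(m+1)` equal to the remaining terms.
-/

/-- A `π`-derivation on a commutative `O`-algebra `B`, relative to the polynomial
`C ∈ O[X,Y]` satisfying `π·C = X^q + Y^q - (X+Y)^q`. -/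
def IsPiDeriv {O : Type*} [CommRing O] (π : O) (q : ℕ) (C : MvPolynomial (Fin 2) O)
    {B : Type*} [CommRing B] [Algebra O B] (δ : B → B) : Prop :=
  δ 1 = 0 ∧
  (∀ x y : B, δ (x + y) = δ x + δ y + MvPolynomial.aeval ![x, y] C) ∧
  (∀ x y : B, δ (x * y) = x ^ q * δ y + y ^ q * δ x + algebraMap O B π * δ x * δ y)

theorem add_mul_pow_eq_pow_add_sum_Icc {R : Type*} [CommSemiring R] (y p d : R) (M : ℕ) :
    (y + p * d) ^ M =
      y ^ M + ∑ j ∈ Finset.Icc 1 M, p ^ j * (M.choose j : R) * y ^ (M - j) * d ^ j := by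
  rw [add_comm, add_pow, Finset.range_eq_Ico, Finset.sum_eq_sum_Ico_succ_bot M.succ_pos,
    zero_add, Nat.succ_eq_add_one, Finset.Ico_add_one_right_eq_Icc]
  simp only [pow_zero, one_mul, Nat.sub_zero, Nat.choose_zero_right, Nat.cast_one, mul_one, mul_pow]
  congr 1
  exact Finset.sum_congr rfl fun j _ => by ring

theorem algebraMap_mul_aeval_eq {O B : Type*} [CommRing O] [CommRing B] [Algebra O B]
    {π : O} {q : ℕ} {C : MvPolynomial (Fin 2) O}
    (hC : MvPolynomial.C π * C = X 0 ^ q + X 1 ^ q - (X 0 + X 1) ^ q) (x y : B) :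
    algebraMap O B π * aeval ![x, y] C = x ^ q + y ^ q - (x + y) ^ q := by
  simpa using congrArg (aeval ![x, y]) hC

namespace IsPiDeriv

variable {O B : Type*} [CommRing O] [CommRing B] [Algebra O B] {π : O} {q : ℕ}
  {C : MvPolynomial (Fin 2) O} {δ : B → B}

def frobeniusLift (hC : MvPolynomial.C π * C = X 0 ^ q + X 1 ^ q - (X 0 + X 1) ^ q)
    (hδ : IsPiDeriv π q C δ) : B →+* B :=
  RingHom.mk'
    { toFun x := x ^ q + algebraMap O B π * δ x
      map_one' := by simp [hδ.1]
      map_mul' x y := by rw [hδ.2.2, mul_pow]; ring }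
    fun x y => by
      -- additivity of `φ` is the defining relation `π C = X^q + Y^q - (X+Y)^q`
      simp only [MonoidHom.coe_mk, OneHom.coe_mk]
      rw [hδ.2.1]
      linear_combination algebraMap_mul_aeval_eq hC x y

variable (hC : MvPolynomial.C π * C = X 0 ^ q + X 1 ^ q - (X 0 + X 1) ^ q)
  (hδ : IsPiDeriv π q C δ)

theorem frobeniusLift_apply (x : B) :
    hδ.frobeniusLift hC x = x ^ q + algebraMap O B π * δ x := rfl

theorem frobeniusLift_pi_pow_mul_pow
    (hfix : hδ.frobeniusLift hC (algebraMap O B π) = algebraMap O B π) (i k : ℕ) (x : B) :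
    hδ.frobeniusLift hC (algebraMap O B π ^ i * x ^ q ^ k) =
      algebraMap O B π ^ i * x ^ q ^ (k + 1) + ∑ j ∈ Finset.Icc 1 (q ^ k),
        algebraMap O B π ^ (i + j) * ((q ^ k).choose j : B) * x ^ (q * (q ^ k - j)) *
          δ x ^ j := by
  rw [map_mul, map_pow, map_pow, hfix, frobeniusLift_apply, add_mul_pow_eq_pow_add_sum_Icc,
    mul_add, Finset.mul_sum, ← pow_mul, ← pow_succ']
  simp only [← pow_mul, pow_add]
  congr 1
  exact Finset.sum_congr rfl fun j _ => by ring

end IsPiDeriv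

theorem pi_pow_mul_t_eq_double_sum_general
    {O B : Type*} [CommRing O] [CommRing B] [Algebra O B]
    (π : O) (q : ℕ)
    (C : MvPolynomial (Fin 2) O)
    (hC : MvPolynomial.C π * C = X 0 ^ q + X 1 ^ q - (X 0 + X 1) ^ q)
    (δ : B → B) (hδ : IsPiDeriv π q C δ)
    (φ : B → B) (hφ : ∀ x : B, φ x = x ^ q + algebraMap O B π * δ x)
    (hfix : φ (algebraMap O B π) = algebraMap O B π)
    (n : ℕ) (hn : 1 ≤ n) (t : ℕ → B)
    (ht : ∀ j ≤ n, φ^[j] (t 0) =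
      ∑ i ∈ Finset.range (j + 1), algebraMap O B π ^ i * t i ^ q ^ (j - i)) :
    algebraMap O B π ^ n * t n =
      ∑ i ∈ Finset.range n, ∑ j ∈ Finset.Icc 1 (q ^ (n - 1 - i)),
        algebraMap O B π ^ (i + j) * ((q ^ (n - 1 - i)).choose j : B) *
          t i ^ (q * (q ^ (n - 1 - i) - j)) * δ (t i) ^ j := by
  obtain ⟨m, rfl⟩ : ∃ m, n = m + 1 := ⟨n - 1, by omega⟩
  obtain rfl : φ = hδ.frobeniusLift hC := funext hφ
  have hstep := ht (m + 1) le_rfl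
  rw [Function.iterate_succ_apply', ht m m.le_succ, map_sum, Finset.sum_range_succ _ (m + 1),
    Finset.sum_congr rfl fun i _ => hδ.frobeniusLift_pi_pow_mul_pow hC hfix i (m - i) (t i)]
    at hstep
  have hexponent : ∑ i ∈ Finset.range (m + 1), algebraMap O B π ^ i * t i ^ q ^ (m + 1 - i) =
      ∑ i ∈ Finset.range (m + 1), algebraMap O B π ^ i * t i ^ q ^ (m - i + 1) :=
    Finset.sum_congr rfl fun i hi => by rw [Nat.sub_add_comm (Finset.mem_range_succ_iff.mp hi)]
  rw [Finset.sum_add_distrib, hexponent, Nat.sub_self, pow_zero, pow_one] at hstep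
  rw [Nat.add_sub_cancel]
  exact (add_left_cancel hstep).symm

/-- The formula for `π^n · t_n` for a family `t_0, …, t_n` whose ghost-type
relations `φ^j(t_0) = Σ_{i=0}^{j} π^i t_i^{q^{j-i}}` hold for all `j ≤ n`. -/
theorem pi_pow_mul_t_eq_double_sum
    {O B : Type*} [CommRing O] [CommRing B] [Algebra O B]
    (π : O) (hπ : π ∈ nonZeroDivisors O) (q : ℕ) (hq : 1 ≤ q)
    (C : MvPolynomial (Fin 2) O)
    (hC : MvPolynomial.C π * C = X 0 ^ q + X 1 ^ q - (X 0 + X 1) ^ q)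
    (δ : B → B) (hδ : IsPiDeriv π q C δ)
    (φ : B → B) (hφ : ∀ x : B, φ x = x ^ q + algebraMap O B π * δ x)
    (hfix : φ (algebraMap O B π) = algebraMap O B π)
    (n : ℕ) (hn : 1 ≤ n) (t : ℕ → B)
    (ht : ∀ j ≤ n, φ^[j] (t 0) =
      ∑ i ∈ Finset.range (j + 1), algebraMap O B π ^ i * t i ^ q ^ (j - i)) :
    algebraMap O B π ^ n * t n =
      ∑ i ∈ Finset.range n, ∑ j ∈ Finset.Icc 1 (q ^ (n - 1 - i)),
        algebraMap O B π ^ (i + j) * ((q ^ (n - 1 - i)).choose j : B) *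
          t i ^ (q * (q ^ (n - 1 - i) - j)) * δ (t i) ^ j :=
  pi_pow_mul_t_eq_double_sum_general π q C hC δ hδ φ hφ hfix n hn t ht
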